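/- arXiv:math/0106094 — 4 statements merged into one kernel-verified Lean document; each statement's English description precedes it below -/
import Mathlib

section
/- Let A be a cofinite category (small, loopless, with each object the source of only finitely many arrows) and let I be a directed partial order. Let K be the set of functions s : Ob(A) → I such that s_a ≥ s_b whenever there is an arrow a → b in A, ordered pointwise. Then K is a directed partial order. -/
open CategoryTheory

section KAux

variable {I : Type*} [PartialOrder I] [Nonempty I]

open Classical in
/-- An arbitrary upper bound of a set, when one exists. -/
noncomputable def ubI (S : Set I) : I :=
  if h : ∃ x, ∀ y ∈ S, y ≤ x then h.choose else Classical.arbitrary I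

lemma exists_ub (hdir : IsDirected I (· ≤ ·)) {S : Set I} (hS : S.Finite) :
    ∃ x, ∀ y ∈ S, y ≤ x := by
  haveI := hdir
  obtain ⟨M, hM⟩ := hS.toFinset.exists_le
  exact ⟨M, fun y hy => hM y (hS.mem_toFinset.2 hy)⟩

lemma ubI_spec (hdir : IsDirected I (· ≤ ·)) {S : Set I} (hS : S.Finite) :
    ∀ y ∈ S, y ≤ ubI S := by
  have h := exists_ub hdir hS
  simp only [ubI]
  rw [dif_pos h]
  exact h.choose_spec

variable {A : Type*} [SmallCategory A]

/-- The set of targets of arrows out of `a`. -/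
def Tset (a : A) : Set A := {b | Nonempty (a ⟶ b)}

lemma mem_Tset_self (a : A) : a ∈ Tset a := ⟨𝟙 a⟩

lemma Tset_subset {a b : A} (h : Nonempty (a ⟶ b)) : Tset b ⊆ Tset a := by
  rintro c ⟨g⟩
  exact ⟨h.some ≫ g⟩

lemma Tset_finite (hfin : ∀ a : A, Finite (Σ b : A, a ⟶ b)) (a : A) :
    (Tset a).Finite := by
  have : Tset a = Set.range (Sigma.fst : (Σ b : A, a ⟶ b) → A) := by
    ext b
    constructor
    · rintro ⟨f⟩; exact ⟨⟨b, f⟩, rfl⟩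
    · rintro ⟨⟨c, f⟩, rfl⟩; exact ⟨f⟩
  rw [this]
  have := hfin a
  exact Set.finite_range _

/-- `b` is strictly below `a` : there is an arrow `a ⟶ b` but none back. -/
def rrel (b a : A) : Prop := Nonempty (a ⟶ b) ∧ ¬ Nonempty (b ⟶ a)

/-- Measure: number of targets of arrows out of `a`. -/
noncomputable def mA (a : A) : ℕ := (Tset a).ncard

lemma mA_lt (hfin : ∀ a : A, Finite (Σ b : A, a ⟶ b)) {a b : A}
    (h : rrel b a) : mA b < mA a := by
  apply Set.ncard_lt_ncard _ (Tset_finite hfin a)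
  constructor
  · exact Tset_subset h.1
  · intro hsub
    exact h.2 (hsub (mem_Tset_self a))

lemma Tset_eq_of_equiv {a a' : A} (h : Nonempty (a ⟶ a')) (h' : Nonempty (a' ⟶ a)) :
    Tset a = Tset a' :=
  le_antisymm (Tset_subset h') (Tset_subset h)

lemma rrel_iff_of_equiv {a a' : A} (h : Nonempty (a ⟶ a')) (h' : Nonempty (a' ⟶ a)) :
    ∀ b, rrel b a ↔ rrel b a' := by
  intro b
  constructor
  · rintro ⟨⟨f⟩, hn⟩
    exact ⟨⟨h'.some ≫ f⟩, fun ⟨g⟩ => hn ⟨g ≫ h'.some⟩⟩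
  · rintro ⟨⟨f⟩, hn⟩
    exact ⟨⟨h.some ≫ f⟩, fun ⟨g⟩ => hn ⟨g ≫ h.some⟩⟩

/-- The body set for the recursive upper bound construction. -/
def Sbody (s t : A → I) (u : A → I) (a : A) : Set I :=
  {x | ∃ b ∈ Tset a, x = s b ∨ x = t b} ∪ {x | ∃ b, rrel b a ∧ x = u b}

/-- The recursively defined common upper bound. -/
noncomputable def uFun (s t : A → I) (hfin : ∀ a : A, Finite (Σ b : A, a ⟶ b)) :
    A → I :=
  WellFounded.fix (InvImage.wf mA Nat.lt_wfRel.wf)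
    (fun a ih => ubI ({x | ∃ b ∈ Tset a, x = s b ∨ x = t b} ∪
      {x | ∃ b, rrel b a ∧ ∃ h : mA b < mA a, x = ih b h}))

lemma uFun_eq (s t : A → I) (hfin : ∀ a : A, Finite (Σ b : A, a ⟶ b)) (a : A) :
    uFun s t hfin a = ubI (Sbody s t (uFun s t hfin) a) := by
  rw [uFun, WellFounded.fix_eq]
  congr 1
  rw [Sbody]
  congr 1
  ext x
  constructor
  · rintro ⟨b, hb, _, rfl⟩
    exact ⟨b, hb, rfl⟩
  · rintro ⟨b, hb, rfl⟩
    exact ⟨b, hb, mA_lt hfin hb, rfl⟩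

lemma Sbody_finite (s t : A → I) (u : A → I)
    (hfin : ∀ a : A, Finite (Σ b : A, a ⟶ b)) (a : A) :
    (Sbody s t u a).Finite := by
  apply Set.Finite.union
  · have : {x | ∃ b ∈ Tset a, x = s b ∨ x = t b} ⊆
        s '' (Tset a) ∪ t '' (Tset a) := by
      rintro x ⟨b, hb, rfl | rfl⟩
      · exact Or.inl ⟨b, hb, rfl⟩
      · exact Or.inr ⟨b, hb, rfl⟩
    exact (((Tset_finite hfin a).image s).union ((Tset_finite hfin a).image t)).subset this
  · have : {x | ∃ b, rrel b a ∧ x = u b} ⊆ u '' (Tset a) := by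
      rintro x ⟨b, hb, rfl⟩
      exact ⟨b, hb.1, rfl⟩
    exact ((Tset_finite hfin a).image u).subset this

lemma uFun_equiv (s t : A → I) (hfin : ∀ a : A, Finite (Σ b : A, a ⟶ b))
    {a a' : A} (h : Nonempty (a ⟶ a')) (h' : Nonempty (a' ⟶ a)) :
    uFun s t hfin a = uFun s t hfin a' := by
  rw [uFun_eq, uFun_eq]
  congr 1
  rw [Sbody, Sbody, Tset_eq_of_equiv h h']
  congr 1
  ext x
  simp only [Set.mem_setOf_eq]
  constructor
  · rintro ⟨b, hb, rfl⟩
    exact ⟨b, (rrel_iff_of_equiv h h' b).1 hb, rfl⟩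
  · rintro ⟨b, hb, rfl⟩
    exact ⟨b, (rrel_iff_of_equiv h h' b).2 hb, rfl⟩

end KAux

/-- Let `A` be a cofinite category (small, loopless, each object the source of
only finitely many arrows) and `I` a directed partial order.  Let `K` be the
set of functions `s : Ob(A) → I` with `s b ≤ s a` whenever there is an arrow
`a ⟶ b`, ordered pointwise.  Then `K` is a directed partial order (it carries
the subtype partial order; we assert it is nonempty and directed). -/
theorem K_directed (A : Type*) [SmallCategory A]
    (hloopless : ∀ (a : A) (f : a ⟶ a), f = 𝟙 a)
    (hfin : ∀ a : A, Finite (Σ b : A, a ⟶ b))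
    (I : Type*) [PartialOrder I] [Nonempty I] (hdir : IsDirected I (· ≤ ·)) :
    Nonempty {s : A → I // ∀ a b : A, (a ⟶ b) → s b ≤ s a} ∧
      IsDirected {s : A → I // ∀ a b : A, (a ⟶ b) → s b ≤ s a} (· ≤ ·) := by
  constructor
  · exact ⟨⟨fun _ => Classical.arbitrary I, fun _ _ _ => le_refl _⟩⟩
  · constructor
    rintro ⟨s, hs⟩ ⟨t, ht⟩
    set u := uFun s t hfin with hu
    have hub : ∀ a, ∀ y ∈ Sbody s t u a, y ≤ u a := by
      intro a
      rw [hu, uFun_eq]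
      exact ubI_spec hdir (Sbody_finite s t u hfin a)
    have hK : ∀ a b : A, (a ⟶ b) → u b ≤ u a := by
      intro a b f
      by_cases hba : Nonempty (b ⟶ a)
      · exact le_of_eq (uFun_equiv s t hfin hba ⟨f⟩)
      · exact hub a (u b) (Or.inr ⟨b, ⟨⟨f⟩, hba⟩, rfl⟩)
    refine ⟨⟨u, hK⟩, ?_, ?_⟩
    · intro a
      exact hub a (s a) (Or.inl ⟨a, mem_Tset_self a, Or.inl rfl⟩)
    · intro a
      exact hub a (t a) (Or.inl ⟨a, mem_Tset_self a, Or.inr rfl⟩)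
end

section
/- Let A be a cofinite category and I a directed partial order, and let K ⊆ ∏_{a ∈ Ob(A)} I be the subset of tuples (s_a) satisfying s_a ≥ s_b whenever there is an arrow a → b in A, with the pointwise order. Then the inclusion K → ∏_{Ob(A)} I is cofinal: for every element s of the product, there exists t ∈ K with t ≥ s. -/
open CategoryTheory
open scoped Classical

/-- The finite set of targets of arrows out of `a`. -/
noncomputable def Sset (A : Type*) [SmallCategory A]
    (hfin : ∀ a : A, Finite (Σ b : A, a ⟶ b)) (a : A) : Finset A :=
  Set.Finite.toFinset (show {b : A | Nonempty (a ⟶ b)}.Finite from by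
    have : Finite (Σ b : A, a ⟶ b) := hfin a
    have h := Set.finite_range (Sigma.fst : (Σ b : A, a ⟶ b) → A)
    convert h using 1
    ext b
    constructor
    · rintro ⟨f⟩; exact ⟨⟨b, f⟩, rfl⟩
    · rintro ⟨⟨c, f⟩, rfl⟩; exact ⟨f⟩)

theorem mem_Sset (A : Type*) [SmallCategory A]
    (hfin : ∀ a : A, Finite (Σ b : A, a ⟶ b)) (a b : A) :
    b ∈ Sset A hfin a ↔ Nonempty (a ⟶ b) := by
  simp [Sset]

/-- Recursive construction of the dominating compatible tuple. -/
noncomputable def buildT (A : Type*) [SmallCategory A]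
    (hfin : ∀ a : A, Finite (Σ b : A, a ⟶ b))
    (I : Type*) (g : Finset I → I) (s : A → I) (a : A) : I :=
  g ((Sset A hfin a).image s ∪
    (((Sset A hfin a).filter
        (fun c => (Sset A hfin c).card < (Sset A hfin a).card)).attach.image
      (fun c => buildT A hfin I g s c.1)))
termination_by (Sset A hfin a).card
decreasing_by exact (Finset.mem_filter.mp c.2).2

/-- Let `A` be a cofinite category and `I` a directed partial order, and let
`K ⊆ ∏_{Ob(A)} I` be the subset of tuples with `s b ≤ s a` whenever there is an
arrow `a ⟶ b`, with the pointwise order.  Then the inclusion `K → ∏_{Ob(A)} I`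
is cofinal: every element of the product is dominated by an element of `K`. -/
theorem K_inclusion_cofinal (A : Type*) [SmallCategory A]
    (hloopless : ∀ (a : A) (f : a ⟶ a), f = 𝟙 a)
    (hfin : ∀ a : A, Finite (Σ b : A, a ⟶ b))
    (I : Type*) [PartialOrder I] [Nonempty I] (hdir : IsDirected I (· ≤ ·)) :
    ∀ s : A → I, ∃ t : A → I, (∀ a b : A, (a ⟶ b) → t b ≤ t a) ∧ s ≤ t := by
  classical
  haveI := hdir
  intro s
  have hg' : ∀ F : Finset I, ∃ M, ∀ x ∈ F, x ≤ M := fun F => F.exists_le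
  choose g hg using hg'
  set t : A → I := buildT A hfin I g s with ht
  -- the defining equation, with attach removed
  have heq : ∀ a : A, t a =
      g ((Sset A hfin a).image s ∪
        (((Sset A hfin a).filter
            (fun c => (Sset A hfin c).card < (Sset A hfin a).card)).image t)) := by
    intro a
    rw [ht, buildT]
    congr 1
    congr 1
    ext x
    simp
  have hself : ∀ a : A, a ∈ Sset A hfin a := fun a =>
    (mem_Sset A hfin a a).mpr ⟨𝟙 a⟩
  have hsub : ∀ {a b : A}, (a ⟶ b) → Sset A hfin b ⊆ Sset A hfin a := by
    intro a b f c hc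
    obtain ⟨h⟩ := (mem_Sset A hfin b c).mp hc
    exact (mem_Sset A hfin a c).mpr ⟨f ≫ h⟩
  refine ⟨t, ?_, ?_⟩
  · intro a b f
    by_cases hSab : Sset A hfin b = Sset A hfin a
    · rw [heq a, heq b, hSab]
    · have hlt : (Sset A hfin b).card < (Sset A hfin a).card :=
        Finset.card_lt_card (lt_of_le_of_ne (hsub f) hSab)
      have hb : b ∈ Sset A hfin a := (mem_Sset A hfin a b).mpr ⟨f⟩
      rw [heq a]
      apply hg
      apply Finset.mem_union_right
      exact Finset.mem_image_of_mem t (Finset.mem_filter.mpr ⟨hb, hlt⟩)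
  · intro a
    rw [heq a]
    apply hg
    exact Finset.mem_union_left _ (Finset.mem_image_of_mem s (hself a))
end

section
/- For every small cofiltered category J, there exists a cofinite directed partial order I (a directed poset in which every element has only finitely many predecessors) and a cofinal (initial) functor I → J. -/
/-!
By Deligne's theorem (`IsFiltered.exists_directed`), the filtered category `Jᵒᵖ` receives a final
functor from a nonempty directed poset `α`. The finite subsets of `α` having a greatest element,
ordered by inclusion, form a cofinite directed poset, and sending such a subset to its greatest
element is monotone with cofinal image, hence a final functor to `α`. Composing and passing to
opposites gives the initial functor to `J`.
-/

open CategoryTheory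

universe u

theorem Monotone.final_functor {I α : Type*} [Preorder I] [IsDirectedOrder I] [Preorder α]
    {g : I → α} (hg : Monotone g) (hcof : ∀ a, ∃ s, a ≤ g s) : hg.functor.Final :=
  Functor.final_of_exists_of_isFiltered _ (fun a => (hcof a).imp fun _ h => ⟨homOfLE h⟩)
    (fun {_ c} _ _ => ⟨c, 𝟙 c, Subsingleton.elim _ _⟩)

abbrev FinsetWithGreatest (α : Type*) [Preorder α] : Type _ :=
  {s : Finset α // ∃ m, IsGreatest (s : Set α) m}

namespace FinsetWithGreatest

variable {α : Type*} [Preorder α]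

noncomputable def greatest (s : FinsetWithGreatest α) : α := s.2.choose

theorem isGreatest_greatest (s : FinsetWithGreatest α) : IsGreatest (s.1 : Set α) s.greatest :=
  s.2.choose_spec

theorem le_greatest {s : FinsetWithGreatest α} {a : α} (ha : a ∈ s.1) : a ≤ s.greatest :=
  s.isGreatest_greatest.2 ha

theorem monotone_greatest : Monotone (greatest : FinsetWithGreatest α → α) :=
  fun s _ hst => le_greatest (hst s.isGreatest_greatest.1)

def singleton (a : α) : FinsetWithGreatest α := ⟨{a}, a, by simp⟩

instance [Nonempty α] : Nonempty (FinsetWithGreatest α) :=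
  ⟨singleton (Classical.arbitrary α)⟩

theorem finite_Iic (s : FinsetWithGreatest α) : {t | t ≤ s}.Finite := by
  classical
  exact (Set.finite_Iic s.1).preimage Subtype.val_injective.injOn

instance [IsDirectedOrder α] : IsDirectedOrder (FinsetWithGreatest α) := by
  classical
  refine ⟨fun s t => ?_⟩
  obtain ⟨u, hsu, htu⟩ := exists_ge_ge s.greatest t.greatest
  have hu : IsGreatest (↑(insert u (s.1 ∪ t.1)) : Set α) u := by
    refine ⟨by simp, fun x hx => ?_⟩
    simp only [Finset.coe_insert, Finset.coe_union, Set.mem_insert_iff, Set.mem_union,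
      Finset.mem_coe] at hx
    rcases hx with rfl | hx | hx
    exacts [le_rfl, (le_greatest hx).trans hsu, (le_greatest hx).trans htu]
  exact ⟨⟨_, u, hu⟩, fun x hx => by simp [hx], fun x hx => by simp [hx]⟩

theorem final_functor_greatest [IsDirectedOrder α] :
    (monotone_greatest (α := α)).functor.Final :=
  monotone_greatest.final_functor fun a =>
    ⟨singleton a, le_greatest (Finset.mem_singleton_self a)⟩

end FinsetWithGreatest

/-- For every small cofiltered category `J` there exist a cofinite directed
partial order `I` (directed, and every element has only finitely many
predecessors) and a cofinal (initial) functor `Iᵒᵖ ⥤ J`.  (Viewing the poset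
`I` as a category with an arrow `s ⟶ t` whenever `s ≥ t`, i.e. taking `Iᵒᵖ`
for the order category of `I`.) -/
theorem exists_cofinite_directed_initial (J : Type u) [SmallCategory J]
    [IsCofiltered J] :
    ∃ (I : Type u) (_ : PartialOrder I) (_ : Nonempty I),
      IsDirected I (· ≤ ·) ∧ (∀ s : I, {t : I | t ≤ s}.Finite) ∧
      ∃ F : Iᵒᵖ ⥤ J, F.Initial := by
  obtain ⟨α, _, _, _, F, _⟩ := IsFiltered.exists_directed Jᵒᵖ
  have := FinsetWithGreatest.final_functor_greatest (α := α)
  exact ⟨FinsetWithGreatest α, inferInstance, inferInstance, inferInstance,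
    FinsetWithGreatest.finite_Iic, (FinsetWithGreatest.monotone_greatest.functor ⋙ F).leftOp,
    inferInstance⟩
end

section
/- Let C be a category with finite limits, A a finite loopless category, I a cofiltered category, and X̃ : A × I ⥤ C a diagram (a level representation of an A-shaped diagram of pro-objects). Then the pro-object Z : I ⥤ C defined by Z_s = lim_{a ∈ A} X̃^a_s is a limit in Pro(C) of the A-shaped diagram a ↦ X̃^a, where X̃^a denotes the pro-object s ↦ X̃^a_s. -/
open CategoryTheory CategoryTheory.Limits Opposite

universe v u

/-- The pro-category of `C`, realized as `(Ind Cᵒᵖ)ᵒᵖ`. -/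
noncomputable abbrev ProCat (C : Type u) [Category.{v} C] : Type _ := (Ind Cᵒᵖ)ᵒᵖ

/-- The functor sending a cofiltered diagram `F : I ⥤ C` to the pro-object it
defines. -/
noncomputable def proOf (C : Type u) [Category.{v} C] (I : Type v) [SmallCategory I]
    [IsCofiltered I] : (I ⥤ C) ⥤ ProCat C :=
  (Functor.opHom I C ⋙ (Functor.whiskeringRight Iᵒᵖ Cᵒᵖ (Ind Cᵒᵖ)).obj Ind.yoneda ⋙ colim).rightOp

section UncurryHelper

variable {J K : Type v} [SmallCategory J] [SmallCategory K]
  {E : Type u} [Category.{v} E] {F : J ⥤ K ⥤ E}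

/-- A cocone over `Functor.uncurry.obj F` built from a diagram of cocones and a cocone over its points. -/
@[simps]
def uncurryCocone (D : DiagramOfCocones F) (t : Cocone D.coconePoints) :
    Cocone (Functor.uncurry.obj F) where
  pt := t.pt
  ι :=
    { app := fun p => (D.obj p.1).ι.app p.2 ≫ t.ι.app p.1
      naturality := by
        rintro ⟨j, k⟩ ⟨j', k'⟩ ⟨fj, fk⟩
        dsimp
        have h1 := (D.obj j').ι.naturality fk
        dsimp at h1
        rw [Category.comp_id] at h1
        have h2 := (D.map fj).w k
        dsimp at h2
        have h3 := t.ι.naturality fj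
        dsimp at h3
        rw [Category.comp_id] at h3
        erw [Category.comp_id, Category.assoc, reassoc_of% h1, ← Category.assoc, ← h2,
          Category.assoc, h3] }

/-- `uncurryCocone D t` is a colimit whenever each cocone in `D` and `t` are colimits. -/
def uncurryCoconeIsColimit (D : DiagramOfCocones F) (Q : ∀ j, IsColimit (D.obj j))
    {t : Cocone D.coconePoints} (T : IsColimit t) : IsColimit (uncurryCocone D t) where
  desc s := T.desc (coconeOfCoconeUncurry Q s)
  fac s := by
    rintro ⟨j, k⟩
    dsimp
    erw [Category.assoc, T.fac (coconeOfCoconeUncurry Q s) j]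
    exact (Q j).fac _ k
  uniq s m hm := by
    refine T.hom_ext fun j => ?_
    erw [T.fac (coconeOfCoconeUncurry Q s) j]
    refine (Q j).hom_ext fun k => ?_
    rw [coconeOfCoconeUncurry_ι_app, (Q j).fac]
    dsimp
    erw [← Category.assoc]
    exact hm (j, k)

end UncurryHelper

section LevelwiseSetup

variable (C : Type u) [Category.{v} C] [HasFiniteLimits C]
    (A : Type v) [SmallCategory A] [FinCategory A]
    (I : Type v) [SmallCategory I] [IsCofiltered I]
    (X : A × I ⥤ C)

/-- The doubly-indexed diagram of ind-objects underlying the level representation. -/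
noncomputable def levelBidiagram : Aᵒᵖ ⥤ Iᵒᵖ ⥤ Ind Cᵒᵖ :=
  (Functor.curry.obj X).op ⋙ Functor.opHom I C ⋙ (Functor.whiskeringRight Iᵒᵖ Cᵒᵖ (Ind Cᵒᵖ)).obj Ind.yoneda

/-- The levelwise limit pro-object. -/
noncomputable def levelLimitDiag : I ⥤ C := Functor.curry.obj (CategoryTheory.Prod.swap I A ⋙ X) ⋙ lim

/-- The `A`-shaped diagram at level `s`. -/
noncomputable def levelRow (s : I) : A ⥤ C :=
  (Functor.curry.obj (CategoryTheory.Prod.swap I A ⋙ X)).obj s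

/-- The diagram of colimit cocones computing, at each level, the finite colimit (in `Cᵒᵖ`,
i.e. finite limit in `C`) pushed into `Ind Cᵒᵖ` via the Yoneda embedding. -/
noncomputable def levelDiagramOfCocones : DiagramOfCocones (levelBidiagram C A I X).flip where
  obj i := Ind.yoneda.mapCocone (limit.cone (levelRow C A I X i.unop)).op
  map {i i'} g :=
    { hom := ((levelLimitDiag C A I X).op ⋙ Ind.yoneda).map g
      w := by
        rintro ⟨a⟩
        dsimp [levelBidiagram, levelLimitDiag, levelRow]
        rw [← Functor.map_comp, ← Functor.map_comp, ← op_comp, ← op_comp]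
        congr 1
        simp
        rw [← op_comp, ← op_comp]
        congr 1
        exact limMap_π _ _ }
  id i := by dsimp; simp; rfl
  comp f g := by
    dsimp
    exact (congrArg (fun h => Ind.yoneda.map (Quiver.Hom.op h))
      ((levelLimitDiag C A I X).map_comp g.unop f.unop)).trans (by rw [op_comp, Functor.map_comp])

end LevelwiseSetup

/-- Let `C` have finite limits, `A` a finite loopless category, `I` a
cofiltered category, and `X : A × I ⥤ C` a level representation of an
`A`-shaped diagram of pro-objects `a ↦ X^a` (where `X^a = (Functor.curry.obj X).obj a`
is the pro-object `s ↦ X^a_s`).  Then the pro-object `Z : I ⥤ C` given by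
`Z s = lim_{a ∈ A} X^a_s` is a limit in `Pro C` of the diagram
`a ↦ X^a`: finite limits of loopless diagrams are computed levelwise. -/
theorem levelwise_finite_limit (C : Type u) [Category.{v} C] [HasFiniteLimits C]
    (A : Type v) [SmallCategory A] [FinCategory A]
    (hloopless : ∀ (a : A) (f : a ⟶ a), f = 𝟙 a)
    (I : Type v) [SmallCategory I] [IsCofiltered I]
    (X : A × I ⥤ C) :
    ∃ _h : HasLimit (Functor.curry.obj X ⋙ proOf C I),
      Nonempty (limit (Functor.curry.obj X ⋙ proOf C I) ≅
        (proOf C I).obj (Functor.curry.obj (CategoryTheory.Prod.swap I A ⋙ X) ⋙ lim)) := by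
  classical
  set Ff := levelBidiagram C A I X with hFf
  -- each column of the flipped diagram has a colimit cocone, by `Ind.yoneda` preserving
  -- finite colimits
  have Qflip : ∀ i : Iᵒᵖ, IsColimit ((levelDiagramOfCocones C A I X).obj i) := fun i =>
    isColimitOfPreserves Ind.yoneda ((limit.isLimit (levelRow C A I X i.unop)).op)
  -- the cocone points form the pro-object of levelwise limits, whose (filtered) colimit exists
  let t : Cocone (levelDiagramOfCocones C A I X).coconePoints :=
    colimit.cocone ((levelLimitDiag C A I X).op ⋙ Ind.yoneda)
  have T : IsColimit t := colimit.isColimit ((levelLimitDiag C A I X).op ⋙ Ind.yoneda)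
  -- hence the uncurried bidiagram has a colimit
  have hU : IsColimit (uncurryCocone (levelDiagramOfCocones C A I X) t) :=
    uncurryCoconeIsColimit _ Qflip T
  haveI h1 : HasColimit (Functor.uncurry.obj (Ff).flip) := HasColimit.mk ⟨_, hU⟩
  haveI h2 : HasColimit (CategoryTheory.Prod.swap Iᵒᵖ Aᵒᵖ ⋙ Functor.uncurry.obj Ff) :=
    hasColimit_of_iso (Functor.uncurryObjFlip Ff).symm
  haveI h2' : HasColimit ((CategoryTheory.Prod.braiding Iᵒᵖ Aᵒᵖ).functor ⋙ Functor.uncurry.obj Ff) := h2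
  haveI h3 : HasColimit (Functor.uncurry.obj Ff) :=
    hasColimit_of_equivalence_comp (CategoryTheory.Prod.braiding Iᵒᵖ Aᵒᵖ)
  -- now reassemble in the other order: colimits along `Iᵒᵖ` first, then along `Aᵒᵖ`
  let big : Cocone ((Functor.curry.obj X ⋙ proOf C I).leftOp) :=
    coconeOfCoconeUncurry (F := Ff) (D := DiagramOfCocones.mkOfHasColimits Ff)
      (fun a => colimit.isColimit _) (colimit.cocone (Functor.uncurry.obj Ff))
  have hbig : IsColimit big :=
    coconeOfCoconeUncurryIsColimit _ (colimit.isColimit (Functor.uncurry.obj Ff))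
  haveI h4 : HasColimit ((Functor.curry.obj X ⋙ proOf C I).leftOp) := HasColimit.mk ⟨big, hbig⟩
  haveI h5 : HasLimit (Functor.curry.obj X ⋙ proOf C I) := hasLimit_of_hasColimit_leftOp _
  refine ⟨h5, ⟨?_⟩⟩
  -- assemble the chain of isomorphisms
  have e1 : colimit ((Functor.curry.obj X ⋙ proOf C I).leftOp) ≅ colimit (Functor.uncurry.obj Ff) :=
    (colimit.isColimit _).coconePointUniqueUpToIso hbig
  have e2 : colimit (Functor.uncurry.obj Ff) ≅ colimit (Functor.uncurry.obj Ff.flip) :=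
    HasColimit.isoOfEquivalence (CategoryTheory.Prod.braiding Aᵒᵖ Iᵒᵖ)
      (Functor.uncurryObjFlip Ff.flip).symm
  have e3 : colimit (Functor.uncurry.obj Ff.flip) ≅
      colimit ((levelLimitDiag C A I X).op ⋙ Ind.yoneda) :=
    (colimit.isColimit _).coconePointUniqueUpToIso hU
  haveI h6 : HasLimit ((Functor.curry.obj X ⋙ proOf C I).leftOp.rightOp) :=
    hasLimit_of_iso (Functor.leftOpRightOpIso (Functor.curry.obj X ⋙ proOf C I)).symm
  exact HasLimit.isoOfNatIso (Functor.leftOpRightOpIso (Functor.curry.obj X ⋙ proOf C I)).symm ≪≫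
    limitRightOpIsoOpColimit ((Functor.curry.obj X ⋙ proOf C I).leftOp) ≪≫
    ((e1 ≪≫ e2 ≪≫ e3).symm.op : _)
end
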